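/- Let M = (F, r) be a faithful maniplex of rank 4 in which every 0-face and every 3-face is non-bipartite, and let M̄ = (F × ZMod 2, r̄) be its canonical double cover (which under these hypotheses is a maniplex of rank 4). If M is thin, then M̄ is thin. -/

import Mathlib

/-- The orbit of a flag `u` under the subgroup generated by `{r j : j ∈ J}`. -/
def MOrbit {n : ℕ} {F : Type*} (r : Fin n → Equiv.Perm F) (J : Set (Fin n)) (u : F) :
    Set F :=
  {v | ∃ g ∈ Subgroup.closure (r '' J), v = g u}

/-- `(F, r)` is a maniplex of rank `n`. -/
def IsManiplex {F : Type*} (n : ℕ) (r : Fin n → Equiv.Perm F) : Prop :=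
  Nonempty F ∧
  (∀ (i : Fin n) (u : F), r i (r i u) = u) ∧
  (∀ (i : Fin n) (u : F), r i u ≠ u) ∧
  (∀ u v : F, v ∈ MOrbit r Set.univ u) ∧
  ∀ i j : Fin n, 1 < |(i : ℤ) - (j : ℤ)| →
    (∀ u : F, r i (r j (r i (r j u))) = u) ∧ ∀ u : F, r i (r j u) ≠ u

/-- The `i`-face containing the flag `u`. -/
def MFace {n : ℕ} {F : Type*} (r : Fin n → Equiv.Perm F) (i : Fin n) (u : F) : Set F :=
  MOrbit r {i}ᶜ u

/-- A maniplex is faithful if the intersection of all faces containing a flag is a singleton. -/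
def IsFaithful {n : ℕ} {F : Type*} (r : Fin n → Equiv.Perm F) : Prop :=
  ∀ u : F, (⋂ i : Fin n, MFace r i u) = {u}

/-- `O` is a face of rank `k ∈ {-1, …, n}`, where the improper ranks `-1` and `n`
give the whole flag set. -/
def IsRankFace {n : ℕ} {F : Type*} (r : Fin n → Equiv.Perm F) (k : ℤ) (O : Set F) : Prop :=
  ((∃ i : Fin n, (i : ℤ) = k) ∧ ∃ u : F, O = MOrbit r {j : Fin n | (j : ℤ) ≠ k} u) ∨
  ((¬ ∃ i : Fin n, (i : ℤ) = k) ∧ O = Set.univ)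

/-- A maniplex is thin if any incident pair of an `(i-1)`-face and `(i+1)`-face lies in
exactly two `i`-faces. -/
def IsThin {n : ℕ} {F : Type*} (r : Fin n → Equiv.Perm F) : Prop :=
  ∀ (i : Fin n) (Fm Fp : Set F),
    IsRankFace r ((i : ℤ) - 1) Fm → IsRankFace r ((i : ℤ) + 1) Fp →
    (Fm ∩ Fp).Nonempty →
    ∃ O₁ O₂ : Set F, O₁ ≠ O₂ ∧
      {O : Set F | (∃ u : F, O = MFace r i u) ∧ (O ∩ (Fm ∩ Fp)).Nonempty} = {O₁, O₂}

/-- The component intersection property. -/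
def HasCIP {n : ℕ} {F : Type*} (r : Fin n → Equiv.Perm F) : Prop :=
  ∀ (k : ℕ) (j : Fin k → Fin n) (H : Fin k → Set F),
    Function.Injective j →
    (∀ l, ∃ u : F, H l = MFace r (j l) u) →
    (∀ l m, (H l ∩ H m).Nonempty) →
    ∀ u v : F, u ∈ ⋂ l, H l → v ∈ ⋂ l, H l →
      v ∈ MOrbit r {m : Fin n | m ∉ Set.range j} u

/-- An automorphism of a maniplex: a permutation of the flags commuting with every `r i`. -/
def IsManiplexAuto {n : ℕ} {F : Type*} (r : Fin n → Equiv.Perm F) (φ : Equiv.Perm F) : Prop :=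
  ∀ (i : Fin n) (u : F), φ (r i u) = r i (φ u)

/-- A maniplex is regular if its automorphism group is transitive on flags. -/
def IsRegularManiplex {n : ℕ} {F : Type*} (r : Fin n → Equiv.Perm F) : Prop :=
  ∀ u v : F, ∃ φ : Equiv.Perm F, IsManiplexAuto r φ ∧ φ u = v

/-- A face `H`, an orbit of the subgroup generated by `{r j : j ∈ J}`, is bipartite. -/
def FaceBipartite {n : ℕ} {F : Type*} (r : Fin n → Equiv.Perm F) (J : Set (Fin n))
    (H : Set F) : Prop :=
  ∃ f : F → ZMod 2, ∀ j ∈ J, ∀ x ∈ H, f (r j x) = f x + 1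

/-- The number of `i`-faces of a maniplex. -/
noncomputable def NumFaces {n : ℕ} {F : Type*} (r : Fin n → Equiv.Perm F) (i : Fin n) : ℕ :=
  {O : Set F | ∃ u : F, O = MFace r i u}.ncard

/-- The canonical double cover of a maniplex. -/
def cdc {n : ℕ} {F : Type*} (r : Fin n → Equiv.Perm F) (i : Fin n) :
    Equiv.Perm (F × ZMod 2) :=
  Equiv.prodCongr (r i) (Equiv.addRight (1 : ZMod 2))

/-- The raviolo of a maniplex of rank `n`: a maniplex of rank `n+1` with two facets. -/
def raviolo {n : ℕ} {F : Type*} (r : Fin n → Equiv.Perm F) (i : Fin (n + 1)) :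
    Equiv.Perm (F × ZMod 2) :=
  if h : (i : ℕ) < n then Equiv.prodCongr (r ⟨i, h⟩) (Equiv.refl (ZMod 2))
  else Equiv.prodCongr (Equiv.refl F) (Equiv.addRight (1 : ZMod 2))

/-- A voltage assignment on a maniplex. -/
def IsVoltage {n : ℕ} {F : Type*} {G : Type*} [Group G] (r : Fin n → Equiv.Perm F)
    (ζ : F × Fin n → G) : Prop :=
  ∀ (u : F) (i : Fin n), ζ (r i u, i) = (ζ (u, i))⁻¹

/-- The permutations of the derived cover of a maniplex with voltage assignment `ζ`. -/
def mcov {n : ℕ} {F : Type*} {G : Type*} [Group G] (r : Fin n → Equiv.Perm F)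
    (ζ : F × Fin n → G) (i : Fin n) : Equiv.Perm (F × G) where
  toFun p := (r i p.1, ζ (p.1, i) * p.2)
  invFun p := ((r i).symm p.1, (ζ ((r i).symm p.1, i))⁻¹ * p.2)
  left_inv p := by simp
  right_inv p := by simp

namespace Aux

variable {n : ℕ} {F : Type*}

/-- action of a word (list of colours) on a flag -/
def wact (r : Fin n → Equiv.Perm F) : List (Fin n) → F → F
  | [], x => x
  | j :: t, x => r j (wact r t x)

@[simp] lemma wact_nil (r : Fin n → Equiv.Perm F) (x : F) : wact r [] x = x := rfl

@[simp] lemma wact_cons (r : Fin n → Equiv.Perm F) (j : Fin n) (t : List (Fin n)) (x : F) :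
    wact r (j :: t) x = r j (wact r t x) := rfl

lemma wact_append (r : Fin n → Equiv.Perm F) (l m : List (Fin n)) (x : F) :
    wact r (l ++ m) x = wact r l (wact r m x) := by
  induction l with
  | nil => rfl
  | cons j t ih => simp [wact, ih]

variable {r : Fin n → Equiv.Perm F}

lemma wact_reverse (hinv : ∀ i u, r i (r i u) = u) (l : List (Fin n)) (x : F) :
    wact r l.reverse (wact r l x) = x := by
  induction l generalizing x with
  | nil => rfl
  | cons j t ih =>
      simp only [List.reverse_cons, wact_append, wact_cons, wact_nil, hinv]
      exact ih x

lemma mem_MOrbit_self {J : Set (Fin n)} (u : F) : u ∈ MOrbit r J u :=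
  ⟨1, Subgroup.one_mem _, rfl⟩

lemma MOrbit_eq_of_mem {J : Set (Fin n)} {u v : F} (h : v ∈ MOrbit r J u) :
    MOrbit r J v = MOrbit r J u := by
  obtain ⟨g, hg, rfl⟩ := h
  ext x
  constructor
  · rintro ⟨h₁, hh₁, rfl⟩
    exact ⟨h₁ * g, Subgroup.mul_mem _ hh₁ hg, rfl⟩
  · rintro ⟨h₁, hh₁, rfl⟩
    exact ⟨h₁ * g⁻¹, Subgroup.mul_mem _ hh₁ (Subgroup.inv_mem _ hg), by simp⟩

lemma word_mem_MOrbit {J : Set (Fin n)} {l : List (Fin n)} (hl : ∀ j ∈ l, j ∈ J) (u : F) :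
    wact r l u ∈ MOrbit r J u := by
  induction l with
  | nil => exact mem_MOrbit_self u
  | cons j t ih =>
      obtain ⟨g, hg, hge⟩ := ih (fun x hx => hl x (List.mem_cons_of_mem _ hx))
      exact ⟨r j * g, Subgroup.mul_mem _
        (Subgroup.subset_closure ⟨j, hl j List.mem_cons_self, rfl⟩) hg,
        by simp [wact, hge]⟩

lemma exists_word_of_mem_MOrbit (hinv : ∀ i u, r i (r i u) = u) {J : Set (Fin n)} {u v : F}
    (h : v ∈ MOrbit r J u) :
    ∃ l : List (Fin n), (∀ j ∈ l, j ∈ J) ∧ wact r l u = v := by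
  obtain ⟨g, hg, rfl⟩ := h
  refine Subgroup.closure_induction (k := r '' J)
    (p := fun g _ => ∀ u : F, ∃ l : List (Fin n), (∀ j ∈ l, j ∈ J) ∧ wact r l u = g u)
    ?_ ?_ ?_ ?_ hg u
  · rintro x ⟨j, hj, rfl⟩ u
    exact ⟨[j], by simpa using hj, rfl⟩
  · intro u; exact ⟨[], by simp, rfl⟩
  · rintro x y _ _ hx hy u
    obtain ⟨ly, hly, hlye⟩ := hy u
    obtain ⟨lx, hlx, hlxe⟩ := hx (y u)
    refine ⟨lx ++ ly, ?_, by rw [wact_append, hlye, hlxe]; rfl⟩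
    intro j hj
    rcases List.mem_append.1 hj with h | h
    exacts [hlx j h, hly j h]
  · rintro x _ hx u
    obtain ⟨l, hl, hle⟩ := hx (x⁻¹ u)
    refine ⟨l.reverse, by simpa using hl, ?_⟩
    have : wact r l (x⁻¹ u) = u := by rw [hle]; simp
    have h2 := wact_reverse hinv l ((x⁻¹ : Equiv.Perm F) u)
    rw [this] at h2
    exact h2

lemma mem_MOrbit_iff_word (hinv : ∀ i u, r i (r i u) = u) {J : Set (Fin n)} {u v : F} :
    v ∈ MOrbit r J u ↔ ∃ l : List (Fin n), (∀ j ∈ l, j ∈ J) ∧ wact r l u = v := by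
  constructor
  · exact exists_word_of_mem_MOrbit hinv
  · rintro ⟨l, hl, rfl⟩; exact word_mem_MOrbit hl u

lemma gen_mem_MOrbit {J : Set (Fin n)} {j : Fin n} (hj : j ∈ J) (u : F) :
    r j u ∈ MOrbit r J u :=
  word_mem_MOrbit (l := [j]) (by simpa using hj) u

lemma MFace_eq_of_mem {i : Fin n} {u v : F} (h : v ∈ MFace r i u) :
    MFace r i v = MFace r i u :=
  MOrbit_eq_of_mem h

lemma face_set_image (r : Fin n → Equiv.Perm F) (i : Fin n) (X : Set F) :
    {O : Set F | (∃ u, O = MFace r i u) ∧ (O ∩ X).Nonempty} = MFace r i '' X := by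
  ext O
  simp only [Set.mem_setOf_eq, Set.mem_image]
  constructor
  · rintro ⟨⟨u, rfl⟩, ⟨p, hpO, hpX⟩⟩
    exact ⟨p, hpX, MFace_eq_of_mem hpO⟩
  · rintro ⟨p, hpX, rfl⟩
    exact ⟨⟨p, rfl⟩, ⟨p, mem_MOrbit_self p, hpX⟩⟩

lemma pair_cases {α : Type*} {A B C O₁ O₂ : α} (hA : A = O₁ ∨ A = O₂) (hB : B = O₁ ∨ B = O₂)
    (hC : C = O₁ ∨ C = O₂) (hAB : A ≠ B) (hCA : C ≠ A) : C = B := by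
  rcases hC with hC | hC <;> rcases hB with hB | hB
  · exact hC.trans hB.symm
  · rcases hA with hA | hA
    · exact absurd (hC.trans hA.symm) hCA
    · exact absurd (hA.trans hB.symm) hAB
  · rcases hA with hA | hA
    · exact absurd (hA.trans hB.symm) hAB
    · exact absurd (hC.trans hA.symm) hCA
  · exact hC.trans hB.symm


section CDC

@[simp] lemma cdc_apply (i : Fin n) (p : F × ZMod 2) : cdc r i p = (r i p.1, p.2 + 1) := rfl

lemma cdc_inv (hinv : ∀ i u, r i (r i u) = u) (i : Fin n) (p : F × ZMod 2) :
    cdc r i (cdc r i p) = p := by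
  simp [hinv]
  ring_nf
  simp [show (2:ZMod 2) = 0 from rfl]

lemma wact_cdc (l : List (Fin n)) (p : F × ZMod 2) :
    wact (cdc r) l p = (wact r l p.1, p.2 + l.length) := by
  induction l with
  | nil => simp
  | cons j t ih =>
      simp only [wact_cons, ih, cdc_apply, List.length_cons]
      refine Prod.ext rfl ?_
      push_cast
      ring

lemma mem_cover_orbit_iff (hinv : ∀ i u, r i (r i u) = u) {J : Set (Fin n)} {u v : F}
    {a b : ZMod 2} :
    (v, b) ∈ MOrbit (cdc r) J (u, a) ↔
      ∃ l : List (Fin n), (∀ j ∈ l, j ∈ J) ∧ wact r l u = v ∧ b = a + l.length := by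
  have hinv' : ∀ (i : Fin n) (p : F × ZMod 2), cdc r i (cdc r i p) = p := cdc_inv hinv
  rw [show MOrbit (cdc r) J (u, a) = MOrbit (cdc r) J (u, a) from rfl,
    mem_MOrbit_iff_word hinv']
  constructor
  · rintro ⟨l, hl, hle⟩
    rw [wact_cdc] at hle
    exact ⟨l, hl, congrArg Prod.fst hle, (congrArg Prod.snd hle).symm⟩
  · rintro ⟨l, hl, h1, h2⟩
    exact ⟨l, hl, by rw [wact_cdc]; exact Prod.ext h1 h2.symm⟩

lemma cover_proj (hinv : ∀ i u, r i (r i u) = u) {J : Set (Fin n)} {u : F} {a : ZMod 2}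
    {p : F × ZMod 2} (h : p ∈ MOrbit (cdc r) J (u, a)) : p.1 ∈ MOrbit r J u := by
  obtain ⟨v, b⟩ := p
  obtain ⟨l, hl, h1, _⟩ := (mem_cover_orbit_iff hinv).1 h
  exact h1 ▸ word_mem_MOrbit hl u

/-- there is an odd closed word at `u` with colours in `J`. -/
def OddAt (r : Fin n → Equiv.Perm F) (J : Set (Fin n)) (u : F) : Prop :=
  ∃ l : List (Fin n), (∀ j ∈ l, j ∈ J) ∧ wact r l u = u ∧ (l.length : ZMod 2) = 1

/-- every closed word at `u` with colours in `J` is even. -/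
def EvenAt (r : Fin n → Equiv.Perm F) (J : Set (Fin n)) (u : F) : Prop :=
  ∀ l : List (Fin n), (∀ j ∈ l, j ∈ J) → wact r l u = u → (l.length : ZMod 2) = 0

lemma cover_orbit_full (hinv : ∀ i u, r i (r i u) = u) {J : Set (Fin n)} {u : F}
    (hodd : OddAt r J u) (a : ZMod 2) :
    MOrbit (cdc r) J (u, a) = {p | p.1 ∈ MOrbit r J u} := by
  obtain ⟨l₀, hl₀, hcl₀, hlen₀⟩ := hodd
  ext ⟨v, b⟩
  simp only [Set.mem_setOf_eq]
  constructor
  · exact fun h => cover_proj hinv h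
  · intro hv
    obtain ⟨l, hl, hle⟩ := exists_word_of_mem_MOrbit hinv hv
    rcases (by decide : ∀ x y : ZMod 2, x = y ∨ x = y + 1) b (a + l.length) with hb | hb
    · exact (mem_cover_orbit_iff hinv).2 ⟨l, hl, hle, hb⟩
    · refine (mem_cover_orbit_iff hinv).2 ⟨l ++ l₀, ?_, ?_, ?_⟩
      · intro j hj; rcases List.mem_append.1 hj with h | h; exacts [hl j h, hl₀ j h]
      · rw [wact_append, hcl₀, hle]
      · rw [hb]; push_cast [List.length_append]; rw [hlen₀]; ring

lemma cover_parity (hinv : ∀ i u, r i (r i u) = u) {J : Set (Fin n)} {u v : F}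
    {a b b' : ZMod 2} (heven : EvenAt r J u)
    (h1 : (v, b) ∈ MOrbit (cdc r) J (u, a)) (h2 : (v, b') ∈ MOrbit (cdc r) J (u, a)) :
    b = b' := by
  obtain ⟨l, hl, hle, hbl⟩ := (mem_cover_orbit_iff hinv).1 h1
  obtain ⟨m, hm, hme, hbm⟩ := (mem_cover_orbit_iff hinv).1 h2
  have hcl : wact r (m.reverse ++ l) u = u := by
    rw [wact_append, hle, ← hme]; exact wact_reverse hinv m u
  have := heven (m.reverse ++ l) (by
    intro j hj; rcases List.mem_append.1 hj with h | h
    exacts [hm j (List.mem_reverse.1 h), hl j h]) hcl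
  rw [hbl, hbm]
  have hlen : ((m.reverse ++ l).length : ZMod 2) = (m.length : ZMod 2) + l.length := by
    push_cast [List.length_append, List.length_reverse]; ring
  rw [hlen] at this
  have hxy : (l.length : ZMod 2) = m.length :=
    (by decide : ∀ x y : ZMod 2, y + x = 0 → x = y) _ _ this
  rw [hxy]

lemma odd_of_not_bipartite (hinv : ∀ i u, r i (r i u) = u) {J : Set (Fin n)} {u : F}
    (h : ¬ FaceBipartite r J (MOrbit r J u)) : OddAt r J u := by
  classical
  by_contra hodd
  have heven : EvenAt r J u := by
    intro l hl hcl
    rcases (by decide : ∀ x : ZMod 2, x = 0 ∨ x = 1) (l.length : ZMod 2) with h0 | h1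
    · exact h0
    · exact absurd ⟨l, hl, hcl, h1⟩ hodd
  have hch : ∀ v : F, ∃ l : List (Fin n),
      v ∈ MOrbit r J u → ((∀ j ∈ l, j ∈ J) ∧ wact r l u = v) := by
    intro v
    by_cases hv : v ∈ MOrbit r J u
    · obtain ⟨l, h1, h2⟩ := exists_word_of_mem_MOrbit hinv hv
      exact ⟨l, fun _ => ⟨h1, h2⟩⟩
    · exact ⟨[], fun hv' => absurd hv' hv⟩
  choose ℓ hℓ using hch
  refine h ⟨fun v => ((ℓ v).length : ZMod 2), ?_⟩
  intro j hj x hx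
  have hrx : r j x ∈ MOrbit r J u := by
    rw [← MOrbit_eq_of_mem hx]; exact gen_mem_MOrbit hj x
  obtain ⟨hx1, hx2⟩ := hℓ x hx
  obtain ⟨hy1, hy2⟩ := hℓ (r j x) hrx
  have key := wact_reverse hinv (ℓ (r j x)) u
  rw [hy2] at key
  have hcl : wact r ((ℓ (r j x)).reverse ++ (j :: ℓ x)) u = u := by
    rw [wact_append, wact_cons, hx2]
    exact key
  have := heven _ (by
    intro i hi
    rcases List.mem_append.1 hi with h' | h'
    · exact hy1 i (List.mem_reverse.1 h')
    · rcases List.mem_cons.1 h' with h'' | h''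
      · exact h'' ▸ hj
      · exact hx1 i h'') hcl
  have hlen : (((ℓ (r j x)).reverse ++ (j :: ℓ x)).length : ZMod 2)
      = ((ℓ (r j x)).length : ZMod 2) + (1 + (ℓ x).length) := by
    push_cast [List.length_append, List.length_reverse, List.length_cons]; ring
  rw [hlen] at this
  exact (by decide : ∀ A B : ZMod 2, A + (1 + B) = 0 → A = B + 1) _ _ this

end CDC


section TwoInv

lemma dup_or_chain (l : List (Fin n)) :
    (∃ A c B, l = A ++ c :: c :: B) ∨ l.Chain' (· ≠ ·) := by
  induction l with
  | nil => exact Or.inr List.isChain_nil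
  | cons a t ih =>
      cases t with
      | nil => exact Or.inr (List.isChain_singleton a)
      | cons b t' =>
          by_cases hab : a = b
          · exact Or.inl ⟨[], a, t', by rw [hab]; rfl⟩
          · rcases ih with ⟨A, c, B, hEq⟩ | hch
            · exact Or.inl ⟨a :: A, c, B, by rw [List.cons_append, ← hEq]⟩
            · exact Or.inr (List.isChain_cons_cons.2 ⟨hab, hch⟩)

lemma chain_head_last {p q : Fin n} :
    ∀ (N : ℕ) (l : List (Fin n)), l.length ≤ N → l.Chain' (· ≠ ·) →
      (∀ j ∈ l, j = p ∨ j = q) → l.length % 2 = 1 →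
      (∃ c, l = [c]) ∨ ∃ c m, l = c :: (m ++ [c]) := by
  intro N
  induction N with
  | zero =>
      intro l hN _ _ hodd
      have : l.length = 0 := Nat.le_zero.1 hN
      omega
  | succ N ih =>
      intro l hN hch hab hodd
      rcases l with _ | ⟨c₁, _ | ⟨c₂, _ | ⟨c₃, t'⟩⟩⟩
      · simp at hodd
      · exact Or.inl ⟨c₁, rfl⟩
      · simp at hodd
      · have h12 : c₁ ≠ c₂ := (List.isChain_cons_cons.1 hch).1
        have h23 : c₂ ≠ c₃ := (List.isChain_cons_cons.1 (List.isChain_cons_cons.1 hch).2).1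
        have h13 : c₃ = c₁ := by
          have a1 := hab c₁ (by simp)
          have a2 := hab c₂ (by simp)
          have a3 := hab c₃ (by simp)
          rcases a1 with rfl | rfl <;> rcases a2 with rfl | rfl <;>
            rcases a3 with rfl | rfl <;> simp_all
        have hrec := ih (c₃ :: t') (by simp at hN ⊢; omega)
          (List.isChain_cons_cons.1 (List.isChain_cons_cons.1 hch).2).2
          (fun j hj => hab j (by simp at hj ⊢; tauto))
          (by simp at hodd ⊢; omega)
        rcases hrec with ⟨c, hc⟩ | ⟨c, m, hc⟩
        · have ht' : t' = [] := by simpa using congrArg List.tail hc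
          have hcc : c₃ = c := by simpa [ht'] using hc
          refine Or.inr ⟨c₁, [c₂], ?_⟩
          rw [ht', h13]
          rfl
        · have hcc : c₃ = c := by simpa using congrArg List.head? hc
          refine Or.inr ⟨c₁, c₂ :: c :: m, ?_⟩
          rw [show c₁ :: c₂ :: c₃ :: t' = c₁ :: c₂ :: (c₃ :: t') from rfl, hc,
            ← hcc, h13]
          rfl

lemma two_inv_even (hinv : ∀ i u, r i (r i u) = u) (hfpf : ∀ i u, r i u ≠ u)
    (p q : Fin n) :
    ∀ (N : ℕ) (l : List (Fin n)) (x : F), l.length ≤ N →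
      (∀ j ∈ l, j = p ∨ j = q) → wact r l x = x → (l.length : ZMod 2) = 0 := by
  intro N
  induction N with
  | zero =>
      intro l x hN _ _
      have : l.length = 0 := Nat.le_zero.1 hN
      rw [this]; rfl
  | succ N ih =>
      intro l x hN hab hcl
      rcases dup_or_chain l with ⟨A, c, B, rfl⟩ | hch
      · have hlet : ∀ j ∈ A ++ B, j = p ∨ j = q := by
          intro j hj
          refine hab j ?_
          rcases List.mem_append.1 hj with h | h
          · exact List.mem_append.2 (Or.inl h)
          · exact List.mem_append.2 (Or.inr (by simp [h]))
        have hred : wact r (A ++ B) x = x := by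
          rw [wact_append] at hcl ⊢
          rwa [show wact r (c :: c :: B) x = wact r B x by simp [hinv]] at hcl
        have h0 := ih (A ++ B) x (by simp [List.length_append] at hN ⊢; omega) hlet hred
        have : ((A ++ c :: c :: B).length : ℕ) = (A ++ B).length + 2 := by
          simp [List.length_append]; omega
        rw [this]; push_cast; rw [h0]; decide
      · rcases Nat.mod_two_eq_zero_or_one l.length with he | ho
        · obtain ⟨k, hk⟩ := Nat.even_iff.2 he
          rw [hk]; push_cast
          exact (by decide : ∀ x : ZMod 2, x + x = 0) _
        · rcases chain_head_last (p := p) (q := q) l.length l le_rfl hch hab ho with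
            ⟨c, rfl⟩ | ⟨c, m, rfl⟩
          · exact absurd hcl (hfpf c x)
          · have h1 : r c (wact r m (r c x)) = x := by
              simpa [wact_append] using hcl
            have hm : wact r m (r c x) = r c x := by
              calc wact r m (r c x) = r c (r c (wact r m (r c x))) := (hinv _ _).symm
              _ = r c x := by rw [h1]
            have h0 := ih m (r c x) (by simp at hN ⊢; omega)
              (fun j hj => hab j (by simp [hj])) hm
            have : (c :: (m ++ [c])).length = m.length + 2 := by simp
            rw [this]; push_cast; rw [h0]; decide

end TwoInv


section Split

lemma wact_comm {c : Fin n} {P : Fin n → Prop}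
    (hc : ∀ j, P j → ∀ y, r c (r j y) = r j (r c y)) :
    ∀ (m : List (Fin n)), (∀ j ∈ m, P j) → ∀ y, r c (wact r m y) = wact r m (r c y) := by
  intro m
  induction m with
  | nil => intro _ y; rfl
  | cons j t ih =>
      intro hm y
      rw [wact_cons, wact_cons, hc j (hm j (by simp)),
        ih (fun x hx => hm x (by simp [hx])) y]

lemma wact_const (hinv : ∀ i u, r i (r i u) = u) {c : Fin n} :
    ∀ (l : List (Fin n)), (∀ j ∈ l, j = c) → ∀ x : F,
      wact r l x = if (l.length : ZMod 2) = 0 then x else r c x := by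
  intro l
  induction l with
  | nil => intro _ x; simp
  | cons j t ih =>
      intro hl x
      have hj : j = c := hl j (by simp)
      subst hj
      rw [wact_cons, ih (fun x hx => hl x (by simp [hx])) x]
      have hlen : (((j :: t).length : ℕ) : ZMod 2) = (t.length : ZMod 2) + 1 := by
        push_cast [List.length_cons]; ring
      rw [hlen]
      rcases (by decide : ∀ z : ZMod 2, z = 0 ∨ z = 1) ((t.length : ZMod 2)) with h | h <;>
        simp [h, hinv, (by decide : (0:ZMod 2) + 1 ≠ 0), (by decide : (1:ZMod 2) + 1 = 0)]

lemma wact_split (hinv : ∀ i u, r i (r i u) = u) {c : Fin n} {P : Fin n → Prop}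
    (hc : ∀ j, P j → ∀ y, r c (r j y) = r j (r c y)) :
    ∀ (l : List (Fin n)), (∀ j ∈ l, P j ∨ j = c) → ∀ x : F,
      wact r l x = wact r (l.filter (· ≠ c)) (wact r (l.filter (· = c)) x) := by
  intro l
  induction l with
  | nil => intro _ x; rfl
  | cons j t ih =>
      intro hl x
      have iht := ih (fun x hx => hl x (by simp [hx]))
      by_cases hj : j = c
      · subst hj
        rw [wact_cons, iht x,
          wact_comm hc _ (fun x hx => by
            have := (List.mem_filter.1 hx)
            rcases hl x (List.mem_cons_of_mem _ this.1) with h | h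
            · exact h
            · exact absurd h (by simpa using this.2))]
        simp only [List.filter_cons]
        simp
      · rw [wact_cons, iht x]
        simp only [List.filter_cons]
        simp [hj]

lemma length_filter_pair (c : Fin n) :
    ∀ l : List (Fin n), (l.filter (· ≠ c)).length + (l.filter (· = c)).length = l.length := by
  intro l
  induction l with
  | nil => rfl
  | cons j t ih =>
      by_cases hj : j = c <;>
        · simp only [List.filter_cons]
          simp [hj, ← ih]
          omega

end Split

section Rank4

variable {r : Fin 4 → Equiv.Perm F}

lemma comm_of (hinv : ∀ (i : Fin 4) (u : F), r i (r i u) = u) {i j : Fin 4}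
    (h1 : ∀ u : F, r i (r j (r i (r j u))) = u) (y : F) :
    r i (r j y) = r j (r i y) := by
  have h2 := h1 (r j y)
  rw [hinv j] at h2
  have h3 := congrArg (r i) h2
  rw [hinv i] at h3
  exact h3.symm

lemma face_ne (hinv : ∀ (i : Fin 4) (u : F), r i (r i u) = u)
    (hfpf : ∀ (i : Fin 4) (u : F), r i u ≠ u) (hf : IsFaithful r) (i : Fin 4) (w : F) :
    MFace r i w ≠ MFace r i (r i w) := by
  intro h
  have hmem : r i w ∈ MFace r i w := by
    rw [h]; exact mem_MOrbit_self _
  have hin : r i w ∈ ⋂ j, MFace r j w := by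
    refine Set.mem_iInter.2 fun j => ?_
    by_cases hji : j = i
    · subst hji; exact hmem
    · exact gen_mem_MOrbit (Set.mem_compl_singleton_iff.2 (Ne.symm hji)) w
  rw [hf w] at hin
  exact hfpf i w hin

lemma even013 (hinv : ∀ (i : Fin 4) (u : F), r i (r i u) = u)
    (hfpf : ∀ (i : Fin 4) (u : F), r i u ≠ u)
    (hcomm : ∀ i j : Fin 4, 1 < |(i : ℤ) - (j : ℤ)| →
      (∀ u : F, r i (r j (r i (r j u))) = u) ∧ ∀ u : F, r i (r j u) ≠ u)
    (hf : IsFaithful r) (u : F) :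
    EvenAt r ({(2 : Fin 4)}ᶜ) u := by
  intro l hl hcl
  have hc0 : ∀ y, r 3 (r 0 y) = r 0 (r 3 y) := comm_of hinv (hcomm 3 0 (by decide)).1
  have hc1 : ∀ y, r 3 (r 1 y) = r 1 (r 3 y) := comm_of hinv (hcomm 3 1 (by decide)).1
  have hP : ∀ j, (j = (0 : Fin 4) ∨ j = 1) → ∀ y, r 3 (r j y) = r j (r 3 y) := by
    rintro j (rfl | rfl)
    exacts [hc0, hc1]
  have hlne : ∀ j ∈ l, j ≠ (2 : Fin 4) := fun j hj =>
    Set.mem_compl_singleton_iff.1 (hl j hj)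
  have hsplit := wact_split hinv hP l
    (fun j hj => (by decide : ∀ j : Fin 4, j ≠ 2 → ((j = 0 ∨ j = 1) ∨ j = 3)) j (hlne j hj)) u
  have hconst : ∀ j ∈ l.filter (· = (3 : Fin 4)), j = 3 := fun j hj => by
    simpa using (List.mem_filter.1 hj).2
  have hmlet : ∀ j ∈ l.filter (· ≠ (3 : Fin 4)), j = (0 : Fin 4) ∨ j = 1 := by
    intro j hj
    have h1 := List.mem_filter.1 hj
    have hne3 : j ≠ 3 := by simpa using h1.2
    exact (by decide : ∀ j : Fin 4, j ≠ 2 → j ≠ 3 → (j = 0 ∨ j = 1)) j (hlne j h1.1) hne3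
  rw [wact_const hinv _ hconst] at hsplit
  rcases (by decide : ∀ z : ZMod 2, z = 0 ∨ z = 1)
      (((l.filter (· = (3 : Fin 4))).length : ZMod 2)) with h0 | h1
  · rw [if_pos h0] at hsplit
    have hm0 : wact r (l.filter (· ≠ (3 : Fin 4))) u = u := by rw [← hsplit]; exact hcl
    have heven := two_inv_even hinv hfpf 0 1 (l.filter (· ≠ (3 : Fin 4))).length _ u le_rfl
      hmlet hm0
    rw [← length_filter_pair (3 : Fin 4) l]
    push_cast
    rw [heven, h0]
    ring
  · rw [if_neg (by rw [h1]; decide)] at hsplit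
    exfalso
    have hsplit' : wact r (l.filter (· ≠ (3 : Fin 4))) (r 3 u) = u := by rw [← hsplit]; exact hcl
    have hrev := wact_reverse hinv (l.filter (· ≠ (3 : Fin 4))) (r 3 u)
    rw [hsplit'] at hrev
    have hrlet : ∀ j ∈ (l.filter (· ≠ (3 : Fin 4))).reverse, j = (0 : Fin 4) ∨ j = 1 :=
      fun j hj => hmlet j (List.mem_reverse.1 hj)
    have hmem : r 3 u ∈ ⋂ i, MFace r i u := by
      refine Set.mem_iInter.2 fun i => ?_
      fin_cases i
      · exact gen_mem_MOrbit (Set.mem_compl_singleton_iff.2 (by decide)) u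
      · exact gen_mem_MOrbit (Set.mem_compl_singleton_iff.2 (by decide)) u
      · rw [← hrev]
        exact word_mem_MOrbit (fun j hj => Set.mem_compl_singleton_iff.2
          ((by decide : ∀ j : Fin 4, (j = 0 ∨ j = 1) → j ≠ 2) j (hrlet j hj))) u
      · rw [← hrev]
        exact word_mem_MOrbit (fun j hj => Set.mem_compl_singleton_iff.2
          ((by decide : ∀ j : Fin 4, (j = 0 ∨ j = 1) → j ≠ 3) j (hrlet j hj))) u
    rw [hf u] at hmem
    exact hfpf 3 u hmem

lemma even023 (hinv : ∀ (i : Fin 4) (u : F), r i (r i u) = u)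
    (hfpf : ∀ (i : Fin 4) (u : F), r i u ≠ u)
    (hcomm : ∀ i j : Fin 4, 1 < |(i : ℤ) - (j : ℤ)| →
      (∀ u : F, r i (r j (r i (r j u))) = u) ∧ ∀ u : F, r i (r j u) ≠ u)
    (hf : IsFaithful r) (u : F) :
    EvenAt r ({(1 : Fin 4)}ᶜ) u := by
  intro l hl hcl
  have hc2 : ∀ y, r 0 (r 2 y) = r 2 (r 0 y) := comm_of hinv (hcomm 0 2 (by decide)).1
  have hc3 : ∀ y, r 0 (r 3 y) = r 3 (r 0 y) := comm_of hinv (hcomm 0 3 (by decide)).1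
  have hP : ∀ j, (j = (2 : Fin 4) ∨ j = 3) → ∀ y, r 0 (r j y) = r j (r 0 y) := by
    rintro j (rfl | rfl)
    exacts [hc2, hc3]
  have hlne : ∀ j ∈ l, j ≠ (1 : Fin 4) := fun j hj =>
    Set.mem_compl_singleton_iff.1 (hl j hj)
  have hsplit := wact_split hinv hP l
    (fun j hj => (by decide : ∀ j : Fin 4, j ≠ 1 → ((j = 2 ∨ j = 3) ∨ j = 0)) j (hlne j hj)) u
  have hconst : ∀ j ∈ l.filter (· = (0 : Fin 4)), j = 0 := fun j hj => by
    simpa using (List.mem_filter.1 hj).2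
  have hmlet : ∀ j ∈ l.filter (· ≠ (0 : Fin 4)), j = (2 : Fin 4) ∨ j = 3 := by
    intro j hj
    have h1 := List.mem_filter.1 hj
    have hne0 : j ≠ 0 := by simpa using h1.2
    exact (by decide : ∀ j : Fin 4, j ≠ 1 → j ≠ 0 → (j = 2 ∨ j = 3)) j (hlne j h1.1) hne0
  rw [wact_const hinv _ hconst] at hsplit
  rcases (by decide : ∀ z : ZMod 2, z = 0 ∨ z = 1)
      (((l.filter (· = (0 : Fin 4))).length : ZMod 2)) with h0 | h1
  · rw [if_pos h0] at hsplit
    have hm0 : wact r (l.filter (· ≠ (0 : Fin 4))) u = u := by rw [← hsplit]; exact hcl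
    have heven := two_inv_even hinv hfpf 2 3 (l.filter (· ≠ (0 : Fin 4))).length _ u le_rfl
      hmlet hm0
    rw [← length_filter_pair (0 : Fin 4) l]
    push_cast
    rw [heven, h0]
    ring
  · rw [if_neg (by rw [h1]; decide)] at hsplit
    exfalso
    have hsplit' : wact r (l.filter (· ≠ (0 : Fin 4))) (r 0 u) = u := by rw [← hsplit]; exact hcl
    have hrev := wact_reverse hinv (l.filter (· ≠ (0 : Fin 4))) (r 0 u)
    rw [hsplit'] at hrev
    have hrlet : ∀ j ∈ (l.filter (· ≠ (0 : Fin 4))).reverse, j = (2 : Fin 4) ∨ j = 3 :=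
      fun j hj => hmlet j (List.mem_reverse.1 hj)
    have hmem : r 0 u ∈ ⋂ i, MFace r i u := by
      refine Set.mem_iInter.2 fun i => ?_
      fin_cases i
      · rw [← hrev]
        exact word_mem_MOrbit (fun j hj => Set.mem_compl_singleton_iff.2
          ((by decide : ∀ j : Fin 4, (j = 2 ∨ j = 3) → j ≠ 0) j (hrlet j hj))) u
      · exact gen_mem_MOrbit (Set.mem_compl_singleton_iff.2 (by decide)) u
      · exact gen_mem_MOrbit (Set.mem_compl_singleton_iff.2 (by decide)) u
      · exact gen_mem_MOrbit (Set.mem_compl_singleton_iff.2 (by decide)) u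
    rw [hf u] at hmem
    exact hfpf 0 u hmem


lemma rank_neg1 : IsRankFace r (-1 : ℤ) (Set.univ : Set F) := Or.inr ⟨by decide, rfl⟩

lemma rank_four : IsRankFace r (4 : ℤ) (Set.univ : Set F) := Or.inr ⟨by decide, rfl⟩

lemma rank_set (i₀ : Fin 4) : {j : Fin 4 | (j : ℤ) ≠ (i₀ : ℤ)} = {i₀}ᶜ := by
  ext j
  simp only [Set.mem_setOf_eq, Set.mem_compl_singleton_iff, ne_eq]
  constructor
  · intro h h'; exact h (by rw [h'])
  · intro h h'; exact h (Fin.ext (by exact_mod_cast h'))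

lemma rank_face (i₀ : Fin 4) (w : F) : IsRankFace r ((i₀ : ℤ)) (MFace r i₀ w) :=
  Or.inl ⟨⟨i₀, rfl⟩, w, by rw [rank_set]; rfl⟩

lemma LB (hinv : ∀ (i : Fin 4) (u : F), r i (r i u) = u)
    (hfpf : ∀ (i : Fin 4) (u : F), r i u ≠ u) (hf : IsFaithful r)
    {e j₀ : Fin 4} (hej : j₀ ≠ e) {w v : F}
    (hsh : ∀ j : Fin 4, j ≠ e → v ∈ MFace r j w)
    (hpair : ∃ O₁ O₂ : Set F, O₁ ≠ O₂ ∧ MFace r e '' (MFace r j₀ w) = {O₁, O₂}) :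
    v = w ∨ v = r e w := by
  by_cases hvw : v ∈ MFace r e w
  · left
    have hin : v ∈ ⋂ j, MFace r j w := Set.mem_iInter.2 fun j => by
      by_cases hje : j = e
      · subst hje; exact hvw
      · exact hsh j hje
    rw [hf w] at hin; exact hin
  · right
    obtain ⟨O₁, O₂, h12, himg⟩ := hpair
    have hmempair : ∀ x : F, x ∈ MFace r j₀ w → (MFace r e x = O₁ ∨ MFace r e x = O₂) := by
      intro x hx
      have hmem : MFace r e x ∈ ({O₁, O₂} : Set (Set F)) := by
        rw [← himg]; exact ⟨x, hx, rfl⟩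
      simpa [Set.mem_insert_iff] using hmem
    have hvj₀ : v ∈ MFace r j₀ w := hsh j₀ hej
    have hv₂j₀ : r e v ∈ MFace r j₀ w := by
      rw [← MFace_eq_of_mem hvj₀]
      exact gen_mem_MOrbit (Set.mem_compl_singleton_iff.2 (Ne.symm hej)) v
    have hA := hmempair v hvj₀
    have hB := hmempair w (mem_MOrbit_self w)
    have hC := hmempair (r e v) hv₂j₀
    have hAB : MFace r e v ≠ MFace r e w := by
      intro h
      refine hvw ?_
      rw [← h]
      exact mem_MOrbit_self v
    have hCA : MFace r e (r e v) ≠ MFace r e v := by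
      intro h
      have hmem : r e v ∈ MFace r e v := by
        rw [← h]; exact mem_MOrbit_self _
      have hin : r e v ∈ ⋂ j, MFace r j v := Set.mem_iInter.2 fun j => by
        by_cases hje : j = e
        · subst hje; exact hmem
        · exact gen_mem_MOrbit (Set.mem_compl_singleton_iff.2 (Ne.symm hje)) v
      rw [hf v] at hin
      exact hfpf e v hin
    have hCB : MFace r e (r e v) = MFace r e w := pair_cases hA hB hC hAB hCA
    have hin : r e v ∈ ⋂ j, MFace r j w := Set.mem_iInter.2 fun j => by
      by_cases hje : j = e
      · subst hje
        rw [← hCB]; exact mem_MOrbit_self _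
      · rw [← MFace_eq_of_mem (hsh j hje)]
        exact gen_mem_MOrbit (Set.mem_compl_singleton_iff.2 (Ne.symm hje)) v
    rw [hf w] at hin
    rw [← hin, hinv e v]

lemma inner1 (hinv : ∀ (i : Fin 4) (u : F), r i (r i u) = u)
    (hfpf : ∀ (i : Fin 4) (u : F), r i u ≠ u)
    (hcomm : ∀ i j : Fin 4, 1 < |(i : ℤ) - (j : ℤ)| →
      (∀ u : F, r i (r j (r i (r j u))) = u) ∧ ∀ u : F, r i (r j u) ≠ u)
    (hf : IsFaithful r) (ht : IsThin r) {w v : F} {a b : ZMod 2}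
    (hp : (v, b) ∈ MOrbit (cdc r) ({(2 : Fin 4)}ᶜ) (w, a))
    (h1 : v ∈ MFace r 1 w) (h0 : v ∈ MFace r 0 w) :
    (v, b) ∈ MOrbit (cdc r) ({(1 : Fin 4)}ᶜ) (w, a) := by
  have h2 : v ∈ MFace r 2 w := cover_proj hinv hp
  have hrk1 : IsRankFace r (((3 : Fin 4) : ℤ) - 1) (MFace r 2 w) := by
    rw [show (((3 : Fin 4) : ℤ) - 1) = ((2 : Fin 4) : ℤ) from by decide]
    exact rank_face 2 w
  have hrk2 : IsRankFace r (((3 : Fin 4) : ℤ) + 1) (Set.univ : Set F) := by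
    rw [show (((3 : Fin 4) : ℤ) + 1) = 4 from by decide]
    exact rank_four
  obtain ⟨O₁, O₂, h12, hset⟩ := ht 3 (MFace r 2 w) Set.univ hrk1 hrk2
    ⟨w, mem_MOrbit_self w, trivial⟩
  rw [face_set_image, Set.inter_univ] at hset
  have hsh : ∀ j : Fin 4, j ≠ 3 → v ∈ MFace r j w := by
    intro j hj; fin_cases j
    exacts [h0, h1, h2, absurd rfl hj]
  rcases LB hinv hfpf hf (by decide : (2 : Fin 4) ≠ 3) hsh ⟨O₁, O₂, h12, hset⟩ with rfl | rfl
  · have hb : b = a := cover_parity hinv (even013 hinv hfpf hcomm hf v) hp (mem_MOrbit_self _)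
    subst hb
    exact mem_MOrbit_self _
  · have hgen : ((r 3 w : F), a + 1) ∈ MOrbit (cdc r) ({(2 : Fin 4)}ᶜ) (w, a) :=
      gen_mem_MOrbit (r := cdc r) (Set.mem_compl_singleton_iff.2 (by decide)) (w, a)
    have hb : b = a + 1 := cover_parity hinv (even013 hinv hfpf hcomm hf w) hp hgen
    subst hb
    exact gen_mem_MOrbit (r := cdc r) (Set.mem_compl_singleton_iff.2 (by decide)) (w, a)

lemma inner2 (hinv : ∀ (i : Fin 4) (u : F), r i (r i u) = u)
    (hfpf : ∀ (i : Fin 4) (u : F), r i u ≠ u)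
    (hcomm : ∀ i j : Fin 4, 1 < |(i : ℤ) - (j : ℤ)| →
      (∀ u : F, r i (r j (r i (r j u))) = u) ∧ ∀ u : F, r i (r j u) ≠ u)
    (hf : IsFaithful r) (ht : IsThin r) {w v : F} {a b : ZMod 2}
    (hp : (v, b) ∈ MOrbit (cdc r) ({(1 : Fin 4)}ᶜ) (w, a))
    (h2 : v ∈ MFace r 2 w) (h3 : v ∈ MFace r 3 w) :
    (v, b) ∈ MOrbit (cdc r) ({(2 : Fin 4)}ᶜ) (w, a) := by
  have h1 : v ∈ MFace r 1 w := cover_proj hinv hp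
  have hrk1 : IsRankFace r (((0 : Fin 4) : ℤ) - 1) (Set.univ : Set F) := by
    rw [show (((0 : Fin 4) : ℤ) - 1) = (-1 : ℤ) from by decide]
    exact rank_neg1
  have hrk2 : IsRankFace r (((0 : Fin 4) : ℤ) + 1) (MFace r 1 w) := by
    rw [show (((0 : Fin 4) : ℤ) + 1) = ((1 : Fin 4) : ℤ) from by decide]
    exact rank_face 1 w
  obtain ⟨O₁, O₂, h12, hset⟩ := ht 0 Set.univ (MFace r 1 w) hrk1 hrk2
    ⟨w, trivial, mem_MOrbit_self w⟩
  rw [face_set_image, Set.univ_inter] at hset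
  have hsh : ∀ j : Fin 4, j ≠ 0 → v ∈ MFace r j w := by
    intro j hj; fin_cases j
    exacts [absurd rfl hj, h1, h2, h3]
  rcases LB hinv hfpf hf (by decide : (1 : Fin 4) ≠ 0) hsh ⟨O₁, O₂, h12, hset⟩ with rfl | rfl
  · have hb : b = a := cover_parity hinv (even023 hinv hfpf hcomm hf v) hp (mem_MOrbit_self _)
    subst hb
    exact mem_MOrbit_self _
  · have hgen : ((r 0 w : F), a + 1) ∈ MOrbit (cdc r) ({(1 : Fin 4)}ᶜ) (w, a) :=
      gen_mem_MOrbit (r := cdc r) (Set.mem_compl_singleton_iff.2 (by decide)) (w, a)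
    have hb : b = a + 1 := cover_parity hinv (even023 hinv hfpf hcomm hf w) hp hgen
    subst hb
    exact gen_mem_MOrbit (r := cdc r) (Set.mem_compl_singleton_iff.2 (by decide)) (w, a)


lemma pair_cases2 {α : Type*} {A B C O₁ O₂ : α} (hA : A = O₁ ∨ A = O₂)
    (hB : B = O₁ ∨ B = O₂) (hC : C = O₁ ∨ C = O₂) (hBC : B ≠ C) : A = B ∨ A = C := by
  rcases hA with hA | hA <;> rcases hB with hB | hB <;> rcases hC with hC | hC <;>
    first
      | (left; exact hA.trans hB.symm)
      | (right; exact hA.trans hC.symm)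
      | (exact absurd (hB.trans hC.symm) hBC)

lemma destruct_univ_neg1 {G : Type*} {s : Fin 4 → Equiv.Perm G} {O : Set G}
    (h : IsRankFace s (-1) O) : O = Set.univ := by
  rcases h with ⟨⟨i₀, hi₀⟩, -⟩ | ⟨-, hO⟩
  · exact absurd hi₀ ((by decide : ∀ i : Fin 4, (i : ℤ) ≠ -1) i₀)
  · exact hO

lemma destruct_univ4 {G : Type*} {s : Fin 4 → Equiv.Perm G} {O : Set G}
    (h : IsRankFace s 4 O) : O = Set.univ := by
  rcases h with ⟨⟨i₀, hi₀⟩, -⟩ | ⟨-, hO⟩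
  · exact absurd hi₀ ((by decide : ∀ i : Fin 4, (i : ℤ) ≠ 4) i₀)
  · exact hO

lemma destruct_face {G : Type*} {s : Fin 4 → Equiv.Perm G} {k : ℤ} {O : Set G}
    (i₀ : Fin 4) (hk : ((i₀ : Fin 4) : ℤ) = k) (h : IsRankFace s k O) :
    ∃ u, O = MOrbit s ({i₀}ᶜ) u := by
  subst hk
  rcases h with ⟨-, u, hO⟩ | ⟨hno, -⟩
  · exact ⟨u, by rw [hO, rank_set]⟩
  · exact absurd ⟨i₀, rfl⟩ hno

end Rank4

end Aux

open Aux

/-- The canonical double cover of a thin faithful `4`-maniplex with non-bipartite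
`0`- and `3`-faces is thin. -/
theorem stmt9 {F : Type*} [Fintype F] (r : Fin 4 → Equiv.Perm F)
    (hM : IsManiplex 4 r) (hf : IsFaithful r)
    (hnb : ∀ i : Fin 4, ((i : ℕ) = 0 ∨ (i : ℕ) = 3) →
      ∀ u : F, ¬ FaceBipartite r {i}ᶜ (MFace r i u))
    (ht : IsThin r) :
    IsThin (cdc r) := by
  classical
  obtain ⟨-, hinv, hfpf, -, hcomm⟩ := hM
  intro i Fm Fp hFm hFp hnemp
  fin_cases i <;> norm_num at hFm hFp
  -- case i = 0
  · have hFmu : Fm = Set.univ := destruct_univ_neg1 hFm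
    subst hFmu
    obtain ⟨⟨w, a⟩, hFpe⟩ := destruct_face 1 (by decide) hFp
    subst hFpe
    obtain ⟨O₁, O₂, h12, hset⟩ := ht 0 Set.univ (MFace r 1 w)
      (by rw [show (((0 : Fin 4) : ℤ) - 1) = (-1 : ℤ) from by decide]; exact rank_neg1)
      (by rw [show (((0 : Fin 4) : ℤ) + 1) = ((1 : Fin 4) : ℤ) from by decide]
          exact rank_face 1 w)
      ⟨w, trivial, mem_MOrbit_self w⟩
    rw [face_set_image, Set.univ_inter] at hset
    refine ⟨{p : F × ZMod 2 | p.1 ∈ O₁}, {p : F × ZMod 2 | p.1 ∈ O₂}, ?_, ?_⟩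
    · intro h
      refine h12 (Set.ext fun x => ?_)
      constructor
      · intro hx
        exact (Set.ext_iff.1 h (x, 0)).1 hx
      · intro hx
        exact (Set.ext_iff.1 h (x, 0)).2 hx
    · rw [face_set_image, Set.univ_inter]
      ext O
      simp only [Set.mem_image, Set.mem_insert_iff, Set.mem_singleton_iff]
      constructor
      · rintro ⟨⟨v, b⟩, hvFp, rfl⟩
        have hvP : v ∈ MFace r 1 w := cover_proj hinv hvFp
        have hfib : MFace (cdc r) 0 (v, b) = {p : F × ZMod 2 | p.1 ∈ MFace r 0 v} :=
          cover_orbit_full hinv (odd_of_not_bipartite hinv (hnb 0 (Or.inl rfl) v)) b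
        have hmem : MFace r 0 v ∈ ({O₁, O₂} : Set (Set F)) := by
          rw [← hset]; exact ⟨v, hvP, rfl⟩
        rcases (by simpa using hmem : MFace r 0 v = O₁ ∨ MFace r 0 v = O₂) with h | h
        · left; rw [h] at hfib; exact hfib
        · right; rw [h] at hfib; exact hfib
      · have lift : ∀ X : Set F, X ∈ ({O₁, O₂} : Set (Set F)) →
            ∃ x : F × ZMod 2, x ∈ MOrbit (cdc r) ({(1 : Fin 4)}ᶜ) (w, a) ∧
              MFace (cdc r) 0 x = {p : F × ZMod 2 | p.1 ∈ X} := by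
          intro X hX
          rw [← hset] at hX
          obtain ⟨v, hvP, hvO⟩ := hX
          obtain ⟨l, hl, hle⟩ := exists_word_of_mem_MOrbit hinv hvP
          refine ⟨(v, a + l.length), (mem_cover_orbit_iff hinv).2 ⟨l, hl, hle, rfl⟩, ?_⟩
          have hfib : MFace (cdc r) 0 (v, a + l.length)
              = {p : F × ZMod 2 | p.1 ∈ MFace r 0 v} :=
            cover_orbit_full hinv (odd_of_not_bipartite hinv (hnb 0 (Or.inl rfl) v)) _
          rw [hvO] at hfib
          exact hfib
        rintro (rfl | rfl)
        · obtain ⟨x, hx1, hx2⟩ := lift O₁ (by simp)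
          exact ⟨x, hx1, hx2⟩
        · obtain ⟨x, hx1, hx2⟩ := lift O₂ (by simp)
          exact ⟨x, hx1, hx2⟩
  -- case i = 1
  · obtain ⟨u₀, hFme⟩ := destruct_face 0 (by decide) hFm
    subst hFme
    obtain ⟨u₁, hFpe⟩ := destruct_face 2 (by decide) hFp
    subst hFpe
    obtain ⟨⟨w, a⟩, hwm, hwp⟩ := hnemp
    rw [(MOrbit_eq_of_mem hwm).symm, (MOrbit_eq_of_mem hwp).symm]
    rw [(MOrbit_eq_of_mem hwm).symm] at hwm
    rw [(MOrbit_eq_of_mem hwp).symm] at hwp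
    refine ⟨MOrbit (cdc r) ({(1 : Fin 4)}ᶜ) (w, a),
      MOrbit (cdc r) ({(1 : Fin 4)}ᶜ) ((cdc r) 1 (w, a)), ?_, ?_⟩
    · intro h
      have hm : (cdc r) 1 (w, a) ∈ MOrbit (cdc r) ({(1 : Fin 4)}ᶜ) (w, a) := by
        rw [h]; exact mem_MOrbit_self _
      have hproj : (r 1 w : F) ∈ MFace r 1 w := cover_proj hinv hm
      exact face_ne hinv hfpf hf 1 w (MFace_eq_of_mem hproj).symm
    · rw [face_set_image]
      -- downstairs pair
      obtain ⟨O₁, O₂, h12, hset⟩ := ht 1 (MFace r 0 w) (MFace r 2 w)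
        (by rw [show (((1 : Fin 4) : ℤ) - 1) = ((0 : Fin 4) : ℤ) from by decide]
            exact rank_face 0 w)
        (by rw [show (((1 : Fin 4) : ℤ) + 1) = ((2 : Fin 4) : ℤ) from by decide]
            exact rank_face 2 w)
        ⟨w, mem_MOrbit_self w, mem_MOrbit_self w⟩
      rw [face_set_image] at hset
      ext O
      simp only [Set.mem_image, Set.mem_insert_iff, Set.mem_singleton_iff, Set.mem_inter_iff]
      constructor
      · rintro ⟨⟨v, b⟩, ⟨hvm, hvp⟩, rfl⟩
        have h0 : v ∈ MFace r 0 w := cover_proj hinv hvm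
        have h2 : v ∈ MFace r 2 w := cover_proj hinv hvp
        have hv1 : MFace r 1 v ∈ ({O₁, O₂} : Set (Set F)) := by
          rw [← hset]; exact ⟨v, ⟨h0, h2⟩, rfl⟩
        have hw1 : MFace r 1 w ∈ ({O₁, O₂} : Set (Set F)) := by
          rw [← hset]; exact ⟨w, ⟨mem_MOrbit_self w, mem_MOrbit_self w⟩, rfl⟩
        have hw1' : MFace r 1 (r 1 w) ∈ ({O₁, O₂} : Set (Set F)) := by
          rw [← hset]
          exact ⟨r 1 w,
            ⟨gen_mem_MOrbit (Set.mem_compl_singleton_iff.2 (by decide)) w,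
             gen_mem_MOrbit (Set.mem_compl_singleton_iff.2 (by decide)) w⟩, rfl⟩
        rcases pair_cases2 (by simpa using hv1) (by simpa using hw1) (by simpa using hw1')
            (face_ne hinv hfpf hf 1 w) with hcase | hcase
        · have h1 : v ∈ MFace r 1 w := by rw [← hcase]; exact mem_MOrbit_self v
          left
          exact MOrbit_eq_of_mem (inner1 hinv hfpf hcomm hf ht hvp h1 h0)
        · have hq : (cdc r) 1 (w, a) ∈ MOrbit (cdc r) ({(0 : Fin 4)}ᶜ) (w, a) :=
            gen_mem_MOrbit (Set.mem_compl_singleton_iff.2 (by decide)) _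
          have hq' : (cdc r) 1 (w, a) ∈ MOrbit (cdc r) ({(2 : Fin 4)}ᶜ) (w, a) :=
            gen_mem_MOrbit (Set.mem_compl_singleton_iff.2 (by decide)) _
          have hvp' : (v, b) ∈ MOrbit (cdc r) ({(2 : Fin 4)}ᶜ) ((r 1 w : F), a + 1) := by
            have := MOrbit_eq_of_mem hq'
            rw [show ((r 1 w : F), a + 1) = (cdc r) 1 (w, a) from rfl, this]
            exact hvp
          have h1' : v ∈ MFace r 1 (r 1 w) := by rw [← hcase]; exact mem_MOrbit_self v
          have h0' : v ∈ MFace r 0 (r 1 w) := by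
            rw [MFace_eq_of_mem (gen_mem_MOrbit (J := {(0 : Fin 4)}ᶜ)
              (Set.mem_compl_singleton_iff.2 (by decide)) w)]
            exact h0
          right
          exact MOrbit_eq_of_mem (inner1 hinv hfpf hcomm hf ht hvp' h1' h0')
      · rintro (rfl | rfl)
        · exact ⟨(w, a), ⟨hwm, hwp⟩, rfl⟩
        · exact ⟨(cdc r) 1 (w, a),
            ⟨gen_mem_MOrbit (Set.mem_compl_singleton_iff.2 (by decide)) _,
             gen_mem_MOrbit (Set.mem_compl_singleton_iff.2 (by decide)) _⟩, rfl⟩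
  -- case i = 2
  · obtain ⟨u₀, hFme⟩ := destruct_face 1 (by decide) hFm
    subst hFme
    obtain ⟨u₁, hFpe⟩ := destruct_face 3 (by decide) hFp
    subst hFpe
    obtain ⟨⟨w, a⟩, hwm, hwp⟩ := hnemp
    rw [(MOrbit_eq_of_mem hwm).symm, (MOrbit_eq_of_mem hwp).symm]
    rw [(MOrbit_eq_of_mem hwm).symm] at hwm
    rw [(MOrbit_eq_of_mem hwp).symm] at hwp
    refine ⟨MOrbit (cdc r) ({(2 : Fin 4)}ᶜ) (w, a),
      MOrbit (cdc r) ({(2 : Fin 4)}ᶜ) ((cdc r) 2 (w, a)), ?_, ?_⟩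
    · intro h
      have hm : (cdc r) 2 (w, a) ∈ MOrbit (cdc r) ({(2 : Fin 4)}ᶜ) (w, a) := by
        rw [h]; exact mem_MOrbit_self _
      have hproj : (r 2 w : F) ∈ MFace r 2 w := cover_proj hinv hm
      exact face_ne hinv hfpf hf 2 w (MFace_eq_of_mem hproj).symm
    · rw [face_set_image]
      obtain ⟨O₁, O₂, h12, hset⟩ := ht 2 (MFace r 1 w) (MFace r 3 w)
        (by rw [show (((2 : Fin 4) : ℤ) - 1) = ((1 : Fin 4) : ℤ) from by decide]
            exact rank_face 1 w)
        (by rw [show (((2 : Fin 4) : ℤ) + 1) = ((3 : Fin 4) : ℤ) from by decide]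
            exact rank_face 3 w)
        ⟨w, mem_MOrbit_self w, mem_MOrbit_self w⟩
      rw [face_set_image] at hset
      ext O
      simp only [Set.mem_image, Set.mem_insert_iff, Set.mem_singleton_iff, Set.mem_inter_iff]
      constructor
      · rintro ⟨⟨v, b⟩, ⟨hvm, hvp⟩, rfl⟩
        have h1 : v ∈ MFace r 1 w := cover_proj hinv hvm
        have h3 : v ∈ MFace r 3 w := cover_proj hinv hvp
        have hv2 : MFace r 2 v ∈ ({O₁, O₂} : Set (Set F)) := by
          rw [← hset]; exact ⟨v, ⟨h1, h3⟩, rfl⟩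
        have hw2 : MFace r 2 w ∈ ({O₁, O₂} : Set (Set F)) := by
          rw [← hset]; exact ⟨w, ⟨mem_MOrbit_self w, mem_MOrbit_self w⟩, rfl⟩
        have hw2' : MFace r 2 (r 2 w) ∈ ({O₁, O₂} : Set (Set F)) := by
          rw [← hset]
          exact ⟨r 2 w,
            ⟨gen_mem_MOrbit (Set.mem_compl_singleton_iff.2 (by decide)) w,
             gen_mem_MOrbit (Set.mem_compl_singleton_iff.2 (by decide)) w⟩, rfl⟩
        rcases pair_cases2 (by simpa using hv2) (by simpa using hw2) (by simpa using hw2')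
            (face_ne hinv hfpf hf 2 w) with hcase | hcase
        · have h2 : v ∈ MFace r 2 w := by rw [← hcase]; exact mem_MOrbit_self v
          left
          exact MOrbit_eq_of_mem (inner2 hinv hfpf hcomm hf ht hvm h2 h3)
        · have hq : (cdc r) 2 (w, a) ∈ MOrbit (cdc r) ({(1 : Fin 4)}ᶜ) (w, a) :=
            gen_mem_MOrbit (Set.mem_compl_singleton_iff.2 (by decide)) _
          have hvm' : (v, b) ∈ MOrbit (cdc r) ({(1 : Fin 4)}ᶜ) ((r 2 w : F), a + 1) := by
            have := MOrbit_eq_of_mem hq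
            rw [show ((r 2 w : F), a + 1) = (cdc r) 2 (w, a) from rfl, this]
            exact hvm
          have h2' : v ∈ MFace r 2 (r 2 w) := by rw [← hcase]; exact mem_MOrbit_self v
          have h3' : v ∈ MFace r 3 (r 2 w) := by
            rw [MFace_eq_of_mem (gen_mem_MOrbit (J := {(3 : Fin 4)}ᶜ)
              (Set.mem_compl_singleton_iff.2 (by decide)) w)]
            exact h3
          right
          exact MOrbit_eq_of_mem (inner2 hinv hfpf hcomm hf ht hvm' h2' h3')
      · rintro (rfl | rfl)
        · exact ⟨(w, a), ⟨hwm, hwp⟩, rfl⟩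
        · exact ⟨(cdc r) 2 (w, a),
            ⟨gen_mem_MOrbit (Set.mem_compl_singleton_iff.2 (by decide)) _,
             gen_mem_MOrbit (Set.mem_compl_singleton_iff.2 (by decide)) _⟩, rfl⟩
  -- case i = 3
  · have hFpu : Fp = Set.univ := destruct_univ4 hFp
    subst hFpu
    obtain ⟨⟨w, a⟩, hFme⟩ := destruct_face 2 (by decide) hFm
    subst hFme
    obtain ⟨O₁, O₂, h12, hset⟩ := ht 3 (MFace r 2 w) Set.univ
      (by rw [show (((3 : Fin 4) : ℤ) - 1) = ((2 : Fin 4) : ℤ) from by decide]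
          exact rank_face 2 w)
      (by rw [show (((3 : Fin 4) : ℤ) + 1) = (4 : ℤ) from by decide]; exact rank_four)
      ⟨w, mem_MOrbit_self w, trivial⟩
    rw [face_set_image, Set.inter_univ] at hset
    refine ⟨{p : F × ZMod 2 | p.1 ∈ O₁}, {p : F × ZMod 2 | p.1 ∈ O₂}, ?_, ?_⟩
    · intro h
      refine h12 (Set.ext fun x => ?_)
      constructor
      · intro hx
        exact (Set.ext_iff.1 h (x, 0)).1 hx
      · intro hx
        exact (Set.ext_iff.1 h (x, 0)).2 hx
    · rw [face_set_image, Set.inter_univ]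
      ext O
      simp only [Set.mem_image, Set.mem_insert_iff, Set.mem_singleton_iff]
      constructor
      · rintro ⟨⟨v, b⟩, hvFm, rfl⟩
        have hvP : v ∈ MFace r 2 w := cover_proj hinv hvFm
        have hfib : MFace (cdc r) 3 (v, b) = {p : F × ZMod 2 | p.1 ∈ MFace r 3 v} :=
          cover_orbit_full hinv (odd_of_not_bipartite hinv (hnb 3 (Or.inr rfl) v)) b
        have hmem : MFace r 3 v ∈ ({O₁, O₂} : Set (Set F)) := by
          rw [← hset]; exact ⟨v, hvP, rfl⟩
        rcases (by simpa using hmem : MFace r 3 v = O₁ ∨ MFace r 3 v = O₂) with h | h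
        · left; rw [h] at hfib; exact hfib
        · right; rw [h] at hfib; exact hfib
      · have lift : ∀ X : Set F, X ∈ ({O₁, O₂} : Set (Set F)) →
            ∃ x : F × ZMod 2, x ∈ MOrbit (cdc r) ({(2 : Fin 4)}ᶜ) (w, a) ∧
              MFace (cdc r) 3 x = {p : F × ZMod 2 | p.1 ∈ X} := by
          intro X hX
          rw [← hset] at hX
          obtain ⟨v, hvP, hvO⟩ := hX
          obtain ⟨l, hl, hle⟩ := exists_word_of_mem_MOrbit hinv hvP
          refine ⟨(v, a + l.length), (mem_cover_orbit_iff hinv).2 ⟨l, hl, hle, rfl⟩, ?_⟩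
          have hfib : MFace (cdc r) 3 (v, a + l.length)
              = {p : F × ZMod 2 | p.1 ∈ MFace r 3 v} :=
            cover_orbit_full hinv (odd_of_not_bipartite hinv (hnb 3 (Or.inr rfl) v)) _
          rw [hvO] at hfib
          exact hfib
        rintro (rfl | rfl)
        · obtain ⟨x, hx1, hx2⟩ := lift O₁ (by simp)
          exact ⟨x, hx1, hx2⟩
        · obtain ⟨x, hx1, hx2⟩ := lift O₂ (by simp)
          exact ⟨x, hx1, hx2⟩
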